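/- arXiv:2604.26744 — 2 statements merged into one kernel-verified Lean document; each statement's English description precedes it below -/
import Mathlib

section
/- Marginalising an encoder along a sufficient statistic preserves the relevance term: let p(X|T) be any encoder satisfying C ↔ T ↔ X, let φ be sufficient for C given T, and define q(x|z) := Σ_t p(x|t) p(t|φ=z). Then the marginal distribution of (φ(T),C,X) under p equals p(φ(T),C)·q(X|φ(T)), and hence I_p(X;C) = I_q(X;C) and C ↔ φ(T) ↔ X is Markov under the reduced joint. -/
open scoped BigOperators

/-- Finite-alphabet mutual information of a joint distribution `p` on `A × B`. -/
noncomputable def mi {A B : Type*} [Fintype A] [Fintype B] (p : A → B → ℝ) : ℝ :=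
  ∑ a, ∑ b, p a b * Real.log (p a b / ((∑ b', p a b') * (∑ a', p a' b)))

/-- Finite-alphabet conditional mutual information `I(A;B∣Z)` of a joint on `A × B × Z`. -/
noncomputable def cmi {A B Z : Type*} [Fintype A] [Fintype B] [Fintype Z]
    (p : A → B → Z → ℝ) : ℝ :=
  ∑ z, ∑ a, ∑ b, p a b z *
    Real.log ((p a b z * (∑ a', ∑ b', p a' b' z)) /
      ((∑ b', p a b' z) * (∑ a', p a' b z)))

/-- `A` and `B` are conditionally independent given `Z` (Markov chain `A ↔ Z ↔ B`),
for a joint distribution `p` on `A × B × Z`. -/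
def CondIndep {A B Z : Type*} [Fintype A] [Fintype B] (p : A → B → Z → ℝ) : Prop :=
  ∀ a b z, p a b z * (∑ a', ∑ b', p a' b' z) = (∑ b', p a b' z) * (∑ a', p a' b z)

/-- A stochastic kernel (each row nonnegative and summing to one). -/
def IsKernel {A B : Type*} [Fintype B] (q : A → B → ℝ) : Prop :=
  (∀ a b, 0 ≤ q a b) ∧ ∀ a, ∑ b, q a b = 1

/-!
Within a fibre of `φ`, sufficiency makes `p(t', c) / p(t')` independent of `t'`, and combined
with `C ↔ T ↔ X` this gives `p(t, c, x) p(t') = p(t', c) p(t, x)` for `φ t = φ t'`. Summing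
over both `t` and `t'` in the fibre of `z` yields `p(z, c, x) p(z) = p(z, c) p(z, x)`, i.e.
`C ↔ φ(T) ↔ X`; dividing by `p(z)` gives the factorisation, and summing it over `z` recovers
`p(c, x)`, so the two mutual informations are computed from the same joint.
-/

open Finset

lemma sum_sum_ite_comm {T Y M : Type*} [Fintype T] [Fintype Y] [AddCommMonoid M]
    (p : T → Prop) [DecidablePred p] (f : T → Y → M) :
    (∑ y, ∑ t, if p t then f t y else 0) = ∑ t, if p t then ∑ y, f t y else 0 := by
  rw [sum_comm]
  refine sum_congr rfl fun t _ => ?_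
  split_ifs <;> simp

lemma eq_zero_of_sum_sum_eq_zero {A B : Type*} [Fintype A] [Fintype B] {f : A → B → ℝ}
    (hf : ∀ a b, 0 ≤ f a b) (h : ∑ a, ∑ b, f a b = 0) (a : A) (b : B) : f a b = 0 := by
  have hrow := (sum_eq_zero_iff_of_nonneg fun a _ => sum_nonneg fun b _ => hf a b).1 h a
    (mem_univ a)
  exact (sum_eq_zero_iff_of_nonneg fun b _ => hf a b).1 hrow b (mem_univ b)

/-- Where the mass `p(z)` vanishes both sides are `0`, thanks to `x / 0 = 0`. -/
lemma CondIndep.eq_mul_div {A B Z : Type*} [Fintype A] [Fintype B] {p : A → B → Z → ℝ}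
    (hp : CondIndep p) (hpos : ∀ a b z, 0 ≤ p a b z) (a : A) (b : B) (z : Z) :
    p a b z = (∑ b', p a b' z) * ((∑ a', p a' b z) / ∑ a', ∑ b', p a' b' z) := by
  by_cases hz : ∑ a', ∑ b', p a' b' z = 0
  · rw [hz, div_zero, mul_zero]
    exact eq_zero_of_sum_sum_eq_zero (fun a b => hpos a b z) hz a b
  · rw [mul_div_assoc', eq_div_iff hz]
    exact hp a b z

section Encoder

variable {T C X : Type*} [Fintype C] [Fintype X] {r : T → C → X → ℝ}

lemma joint_mul_mass_eq_of_sufficient (hpos : ∀ t c x, 0 ≤ r t c x)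
    (hIB : CondIndep (fun c x t => r t c x)) {t t' : T} {c : C}
    (hsuff : (∑ c', ∑ x, r t' c' x) * (∑ x, r t c x) =
      (∑ c', ∑ x, r t c' x) * (∑ x, r t' c x)) (x : X) :
    r t c x * (∑ c', ∑ x', r t' c' x') = (∑ x', r t' c x') * (∑ c', r t c' x) := by
  by_cases ht : ∑ c', ∑ x', r t c' x' = 0
  · have hzero := eq_zero_of_sum_sum_eq_zero (hpos t) ht
    simp [hzero]
  · apply mul_left_cancel₀ ht
    calc (∑ c', ∑ x', r t c' x') * (r t c x * ∑ c', ∑ x', r t' c' x')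
        = (r t c x * ∑ c', ∑ x', r t c' x') * ∑ c', ∑ x', r t' c' x' := by ring
      _ = ((∑ x', r t c x') * ∑ c', r t c' x) * ∑ c', ∑ x', r t' c' x' := by rw [hIB c x t]
      _ = ((∑ c', ∑ x', r t' c' x') * ∑ x', r t c x') * ∑ c', r t c' x := by ring
      _ = ((∑ c', ∑ x', r t c' x') * ∑ x', r t' c x') * ∑ c', r t c' x := by rw [hsuff]
      _ = (∑ c', ∑ x', r t c' x') * ((∑ x', r t' c x') * ∑ c', r t c' x) := by ring

lemma condIndep_fiberSum [Fintype T] {Z : Type*} [DecidableEq Z] (φ : T → Z)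
    (hpos : ∀ t c x, 0 ≤ r t c x) (hIB : CondIndep (fun c x t => r t c x))
    (hsuff : ∀ t t' c, φ t = φ t' →
      (∑ c', ∑ x, r t' c' x) * (∑ x, r t c x) =
      (∑ c', ∑ x, r t c' x) * (∑ x, r t' c x)) :
    CondIndep (fun c x z => ∑ t, if φ t = z then r t c x else 0) := by
  intro c x z
  simp only [sum_sum_ite_comm]
  rw [sum_mul_sum, sum_mul_sum, sum_comm]
  refine sum_congr rfl fun t' _ => sum_congr rfl fun t _ => ?_
  by_cases ht : φ t = z <;> by_cases ht' : φ t' = z <;> simp only [ht, ht', if_true, if_false,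
    mul_zero, zero_mul]
  exact joint_mul_mass_eq_of_sufficient hpos hIB (hsuff t t' c (ht.trans ht'.symm)) x

end Encoder

theorem stmt7_general {T C X Z : Type*} [Fintype T] [Fintype C] [Fintype X] [Fintype Z]
    [DecidableEq Z]
    (φ : T → Z) (r : T → C → X → ℝ)
    (hpos : ∀ t c x, 0 ≤ r t c x)
    (hIB : CondIndep (fun c x t => r t c x))
    (hsuff : ∀ t t' c, φ t = φ t' →
      (∑ c', ∑ x, r t' c' x) * (∑ x, r t c x) =
      (∑ c', ∑ x, r t c' x) * (∑ x, r t' c x)) :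
    (∀ z c x, (∑ t, if φ t = z then r t c x else 0) =
       (∑ t, if φ t = z then ∑ x', r t c x' else 0) *
       ((∑ t, if φ t = z then ∑ c', r t c' x else 0) /
        (∑ t, if φ t = z then ∑ c', ∑ x', r t c' x' else 0))) ∧
    mi (fun x c => ∑ t, r t c x) =
      mi (fun x c => ∑ z, (∑ t, if φ t = z then ∑ x', r t c x' else 0) *
        ((∑ t, if φ t = z then ∑ c', r t c' x else 0) /
         (∑ t, if φ t = z then ∑ c', ∑ x', r t c' x' else 0))) ∧
    CondIndep (fun c x z => ∑ t, if φ t = z then r t c x else 0) := by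
  have hmarkov := condIndep_fiberSum φ hpos hIB hsuff
  have hfactor : ∀ z c x, (∑ t, if φ t = z then r t c x else 0) =
      (∑ t, if φ t = z then ∑ x', r t c x' else 0) *
      ((∑ t, if φ t = z then ∑ c', r t c' x else 0) /
        (∑ t, if φ t = z then ∑ c', ∑ x', r t c' x' else 0)) := fun z c x => by
    have hfiber_pos : ∀ c x z, 0 ≤ ∑ t, if φ t = z then r t c x else 0 := fun c x z =>
      sum_nonneg fun t _ => by split_ifs <;> simp [hpos]
    simpa only [sum_sum_ite_comm] using hmarkov.eq_mul_div hfiber_pos c x z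
  refine ⟨hfactor, ?_, hmarkov⟩
  congr 1
  funext x c
  simp_rw [← hfactor]
  rw [sum_comm]
  simp

/-- Marginalising an encoder along a sufficient statistic
preserves the relevance term: the marginal of `(φ(T),C,X)` under `p` equals
`p(φ(T),C)·q(X∣φ(T))` with `q(x∣z) := Σ_t p(x∣t) p(t∣φ=z)`, hence
`I_p(X;C) = I_q(X;C)` and `C ↔ φ(T) ↔ X` is Markov under the reduced joint. -/
theorem stmt7 {T C X Z : Type*} [Fintype T] [Fintype C] [Fintype X] [Fintype Z]
    [DecidableEq Z]
    (φ : T → Z) (r : T → C → X → ℝ)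
    (hpos : ∀ t c x, 0 ≤ r t c x)
    (hsum : ∑ t, ∑ c, ∑ x, r t c x = 1)
    (hIB : CondIndep (fun c x t => r t c x))
    (hsuff : ∀ t t' c, φ t = φ t' →
      (∑ c', ∑ x, r t' c' x) * (∑ x, r t c x) =
      (∑ c', ∑ x, r t c' x) * (∑ x, r t' c x)) :
    (∀ z c x, (∑ t, if φ t = z then r t c x else 0) =
       (∑ t, if φ t = z then ∑ x', r t c x' else 0) *
       ((∑ t, if φ t = z then ∑ c', r t c' x else 0) /
        (∑ t, if φ t = z then ∑ c', ∑ x', r t c' x' else 0))) ∧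
    mi (fun x c => ∑ t, r t c x) =
      mi (fun x c => ∑ z, (∑ t, if φ t = z then ∑ x', r t c x' else 0) *
        ((∑ t, if φ t = z then ∑ c', r t c' x else 0) /
         (∑ t, if φ t = z then ∑ c', ∑ x', r t c' x' else 0))) ∧
    CondIndep (fun c x z => ∑ t, if φ t = z then r t c x else 0) :=
  stmt7_general φ r hpos hIB hsuff
end

section
/- Lagrangian preservation (one direction): if φ is sufficient for C given T, then for every β ≥ 0, the infimum over encoders p(X|T) (with C ↔ T ↔ X Markov) of I(X;T) − β·I(X;C) is at most the infimum over encoders q(X|Z), Z = φ(T) (with C ↔ Z ↔ X Markov), of I(X;Z) − β·I(X;C). -/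
/-!
Precomposing a reduced encoder `q(X∣Z)` with `φ` gives an encoder of `T` with the same
Lagrangian: the joint of `(C, X)` is unchanged, and `I(X;T) = I(X;Z)` because both equal the
`p`-average of the divergences `D(q(·∣φ t) ‖ p(X))`. So every reduced value is a full value.
The full values are bounded below (`I(X;T)` by Gibbs' inequality, `I(X;C) ≤ |𝒳|`), and the
reduced set is nonempty since `𝒳` is, so `csInf_le_csInf` applies.
-/

open scoped BigOperators

/-- The IB Lagrangian `I(X;T) − β·I(X;C)` of an encoder `e = p(X∣T)` for the joint
`p` on `T × C`, computed under the induced joint `p(t,c)·e(x∣t)`. -/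
noncomputable def fullLag {T C X : Type*} [Fintype T] [Fintype C] [Fintype X]
    (p : T → C → ℝ) (β : ℝ) (e : T → X → ℝ) : ℝ :=
  mi (fun t x => (∑ c, p t c) * e t x) - β * mi (fun c x => ∑ t, p t c * e t x)

/-- The pushforward joint of `(φ(T), C)`. -/
noncomputable def pushJoint {T C Z : Type*} [Fintype T] [DecidableEq Z]
    (p : T → C → ℝ) (φ : T → Z) (z : Z) (c : C) : ℝ :=
  ∑ t, if φ t = z then p t c else 0

open Finset Real

lemma sub_le_mul_log_div {a b : ℝ} (ha : 0 ≤ a) (hb : 0 < b) : a - b ≤ a * log (a / b) := by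
  have h := self_sub_one_le_mul_log (div_nonneg ha hb.le)
  calc a - b = b * (a / b - 1) := by field_simp
    _ ≤ b * (a / b * log (a / b)) := mul_le_mul_of_nonneg_left h hb.le
    _ = a * log (a / b) := by field_simp

lemma le_sum_row {A B : Type*} [Fintype B] {p : A → B → ℝ} (h0 : ∀ a b, 0 ≤ p a b)
    (a : A) (b : B) :
    p a b ≤ ∑ b', p a b' :=
  single_le_sum (fun b' _ => h0 a b') (mem_univ b)

lemma le_sum_col {A B : Type*} [Fintype A] {p : A → B → ℝ} (h0 : ∀ a b, 0 ≤ p a b)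
    (a : A) (b : B) :
    p a b ≤ ∑ a', p a' b :=
  single_le_sum (fun a' _ => h0 a' b) (mem_univ a)

lemma sub_mul_le_mul_log_div {a u v : ℝ} (ha : 0 ≤ a) (hu : a ≤ u) (hv : a ≤ v) :
    a - u * v ≤ a * log (a / (u * v)) := by
  rcases ha.eq_or_lt with rfl | ha
  · simpa using mul_nonneg hu hv
  · exact sub_le_mul_log_div ha.le (mul_pos (ha.trans_le hu) (ha.trans_le hv))

lemma mul_log_div_le_mul_log_inv {a u v : ℝ} (ha : 0 ≤ a) (hu : a ≤ u) (hv : a ≤ v) :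
    a * log (a / (u * v)) ≤ a * log v⁻¹ := by
  rcases ha.eq_or_lt with rfl | ha
  · simp
  have hu' := ha.trans_le hu
  have hv' := ha.trans_le hv
  refine mul_le_mul_of_nonneg_left (log_le_log (by positivity) ?_) ha.le
  rw [div_le_iff₀ (mul_pos hu' hv'), inv_mul_eq_div, mul_div_cancel_right₀ _ hv'.ne']
  exact hu

section MutualInformation

variable {A B : Type*} [Fintype A] [Fintype B]

lemma sub_sq_le_mi (p : A → B → ℝ) (h0 : ∀ a b, 0 ≤ p a b) :
    (∑ a, ∑ b, p a b) - (∑ a, ∑ b, p a b) ^ 2 ≤ mi p := by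
  have hprod : ∑ a, ∑ b, (∑ b', p a b') * (∑ a', p a' b) = (∑ a, ∑ b, p a b) ^ 2 := by
    rw [← sum_mul_sum, sum_comm (f := fun a b => p a b) (s := univ) (t := univ), sq]
  calc (∑ a, ∑ b, p a b) - (∑ a, ∑ b, p a b) ^ 2
      = ∑ a, ∑ b, (p a b - (∑ b', p a b') * (∑ a', p a' b)) := by
        simp only [sum_sub_distrib, hprod]
    _ ≤ mi p := sum_le_sum fun a _ => sum_le_sum fun b _ =>
        sub_mul_le_mul_log_div (h0 a b) (le_sum_row h0 a b) (le_sum_col h0 a b)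

lemma mi_le_card (p : A → B → ℝ) (h0 : ∀ a b, 0 ≤ p a b) : mi p ≤ Fintype.card B :=
  calc mi p ≤ ∑ a, ∑ b, p a b * log (∑ a', p a' b)⁻¹ :=
        sum_le_sum fun a _ => sum_le_sum fun b _ =>
          mul_log_div_le_mul_log_inv (h0 a b) (le_sum_row h0 a b) (le_sum_col h0 a b)
    _ = ∑ b, negMulLog (∑ a, p a b) := by
        rw [sum_comm]
        refine sum_congr rfl fun b _ => ?_
        rw [← sum_mul, log_inv, negMulLog]
        ring
    _ ≤ ∑ _b : B, (1 : ℝ) := sum_le_sum fun b _ =>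
        have hb : 0 ≤ ∑ a, p a b := sum_nonneg fun a _ => h0 a b
        (negMulLog_le_one_sub_self hb).trans (sub_le_self 1 hb)
    _ = Fintype.card B := by simp

end MutualInformation

lemma sum_fiber_mul {T Z : Type*} [Fintype T] [Fintype Z] [DecidableEq Z]
    (φ : T → Z) (w : T → ℝ) (g : Z → ℝ) :
    ∑ z, (∑ t, if φ t = z then w t else 0) * g z = ∑ t, w t * g (φ t) := by
  simp only [sum_mul, ite_mul, zero_mul]
  rw [sum_comm]
  simp

lemma mi_mul_kernel {T X : Type*} [Fintype T] [Fintype X]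
    (w : T → ℝ) (f : T → X → ℝ) (hf : ∀ t, ∑ x, f t x = 1) :
    mi (fun t x => w t * f t x) =
      ∑ t, w t * ∑ x, f t x * log (f t x / ∑ t', w t' * f t' x) := by
  unfold mi
  refine sum_congr rfl fun t _ => ?_
  rw [← mul_sum, hf, mul_one, mul_sum]
  refine sum_congr rfl fun x _ => ?_
  rcases eq_or_ne (w t) 0 with h | h
  · simp [h]
  · rw [mul_div_mul_left _ _ h, mul_assoc]

lemma mi_comp_kernel {T Z X : Type*} [Fintype T] [Fintype Z] [DecidableEq Z] [Fintype X]
    (φ : T → Z) (w : T → ℝ) (f : Z → X → ℝ) (hf : ∀ z, ∑ x, f z x = 1) :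
    mi (fun t x => w t * f (φ t) x) =
      mi (fun z x => (∑ t, if φ t = z then w t else 0) * f z x) := by
  rw [mi_mul_kernel w _ (fun t => hf (φ t)), mi_mul_kernel _ f hf]
  simp only [sum_fiber_mul]

lemma sum_pushJoint {T C Z : Type*} [Fintype T] [Fintype C] [DecidableEq Z]
    (p : T → C → ℝ) (φ : T → Z) (z : Z) :
    ∑ c, pushJoint p φ z c = ∑ t, if φ t = z then ∑ c, p t c else 0 := by
  unfold pushJoint
  rw [sum_comm]
  simp only [sum_ite_irrel, sum_const_zero]

theorem fullLag_comp {T C Z X : Type*} [Fintype T] [Fintype C] [Fintype Z] [DecidableEq Z]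
    [Fintype X] (p : T → C → ℝ) (φ : T → Z) (β : ℝ) (f : Z → X → ℝ)
    (hf : ∀ z, ∑ x, f z x = 1) :
    fullLag p β (fun t => f (φ t)) = fullLag (pushJoint p φ) β f := by
  unfold fullLag
  simp only [sum_pushJoint, mi_comp_kernel φ _ f hf]
  congr 3
  funext c x
  exact (sum_fiber_mul φ (fun t => p t c) fun z => f z x).symm

lemma fullLag_bddBelow {T C X : Type*} [Fintype T] [Fintype C] [Fintype X]
    (p : T → C → ℝ) {β : ℝ} (hβ : 0 ≤ β) (hp : ∀ t c, 0 ≤ p t c) :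
    BddBelow {v : ℝ | ∃ e : T → X → ℝ, IsKernel e ∧ v = fullLag p β e} := by
  set s := ∑ t, ∑ c, p t c
  refine ⟨s - s ^ 2 - β * Fintype.card X, ?_⟩
  rintro _ ⟨e, ⟨he0, he1⟩, rfl⟩
  have hmass : ∑ t, ∑ x, (∑ c, p t c) * e t x = s := by
    simp only [← mul_sum, he1, mul_one, s]
  have hTX := sub_sq_le_mi (fun t x => (∑ c, p t c) * e t x)
    fun t x => mul_nonneg (sum_nonneg fun c _ => hp t c) (he0 t x)
  have hCX := mi_le_card (fun c x => ∑ t, p t c * e t x)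
    fun c x => sum_nonneg fun t _ => mul_nonneg (hp t c) (he0 t x)
  rw [hmass] at hTX
  have := mul_le_mul_of_nonneg_left hCX hβ
  unfold fullLag
  linarith

lemma exists_isKernel {A B : Type*} [Fintype B] [Nonempty B] : ∃ q : A → B → ℝ, IsKernel q :=
  ⟨fun _ _ => (Fintype.card B : ℝ)⁻¹, fun _ _ => by positivity, fun _ => by simp⟩

theorem stmt9_general {T C Z X : Type*} [Fintype T] [Fintype C] [Fintype Z] [DecidableEq Z]
    [Fintype X] [Nonempty X]
    (φ : T → Z) (p : T → C → ℝ) (β : ℝ) (hβ : 0 ≤ β)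
    (hpos : ∀ t c, 0 ≤ p t c) :
    sInf {v : ℝ | ∃ e : T → X → ℝ, IsKernel e ∧ v = fullLag p β e} ≤
      sInf {v : ℝ | ∃ f : Z → X → ℝ, IsKernel f ∧ v = fullLag (pushJoint p φ) β f} := by
  obtain ⟨f₀, hf₀⟩ := exists_isKernel (A := Z) (B := X)
  refine csInf_le_csInf (fullLag_bddBelow p hβ hpos) ⟨_, f₀, hf₀, rfl⟩ ?_
  rintro _ ⟨f, ⟨hf0, hf1⟩, rfl⟩
  exact ⟨fun t => f (φ t), ⟨fun t => hf0 (φ t), fun t => hf1 (φ t)⟩,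
    (fullLag_comp p φ β f hf1).symm⟩

/-- Lagrangian preservation (one direction): if `φ` is sufficient
for `C` given `T`, then for every `β ≥ 0` the infimum of the full IB Lagrangian over
encoders `p(X∣T)` is at most the infimum of the reduced Lagrangian over encoders
`q(X∣Z)` with `Z = φ(T)`. -/
theorem stmt9 {T C Z X : Type*} [Fintype T] [Fintype C] [Fintype Z] [DecidableEq Z]
    [Fintype X] [Nonempty X]
    (φ : T → Z) (p : T → C → ℝ) (β : ℝ) (hβ : 0 ≤ β)
    (hpos : ∀ t c, 0 ≤ p t c)
    (hsum : ∑ t, ∑ c, p t c = 1)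
    (hsuff : CondIndep (fun c t z => if φ t = z then p t c else 0)) :
    sInf {v : ℝ | ∃ e : T → X → ℝ, IsKernel e ∧ v = fullLag p β e} ≤
      sInf {v : ℝ | ∃ f : Z → X → ℝ, IsKernel f ∧ v = fullLag (pushJoint p φ) β f} :=
  stmt9_general φ p β hβ hpos
end
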